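/- arXiv:1902.10869 — 4 statements merged into one kernel-verified Lean document; each statement's English description precedes it below -/
import Mathlib

section
/- If the attack (u, u^GNSS) is undetectable, then for all times t ≥ 0 the nominal and attacked trajectories satisfy p(t)ᵀp(t) = p_n(t)ᵀp_n(t) and v(t)ᵀp(t) = v_n(t)ᵀp_n(t); that is, at all times the attacked position has the same distance from the origin as the nominal position, and the component of the attacked velocity along the attacked position equals the component of the nominal velocity along the nominal position. -/
open scoped InnerProductSpace

noncomputable abbrev E2 := EuclideanSpace ℝ (Fin 2)

/-- An attack `(u, uGNSS)` is undetectable if the spoofed GNSS reading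
`p + uGNSS` equals the nominal reading `pₙ` and the RSSI reading `pᵀp`
equals the nominal reading `pₙᵀpₙ` at all times `t ≥ 0`. -/
def Undetectable (pn p uGNSS : ℝ → E2) : Prop :=
  ∀ t ≥ (0 : ℝ), p t + uGNSS t = pn t ∧ ⟪p t, p t⟫_ℝ = ⟪pn t, pn t⟫_ℝ

/-- **Lemma 1 (Undetectable trajectories).** If the attack `(u, uGNSS)` is
undetectable, then at all times `t ≥ 0` we have `pᵀp = pₙᵀpₙ` and
`vᵀp = vₙᵀpₙ`. -/
theorem undetectable_trajectories
    (umax : ℝ) (humax : 0 < umax)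
    (pn vn un p v u uGNSS : ℝ → E2)
    -- nominal double-integrator dynamics: ṗₙ = vₙ, v̇ₙ = uₙ
    (hpn : ∀ t ≥ (0 : ℝ), HasDerivAt pn (vn t) t)
    (hvn : ∀ t ≥ (0 : ℝ), HasDerivAt vn (un t) t)
    -- attacked double-integrator dynamics: ṗ = v, v̇ = u
    (hp : ∀ t ≥ (0 : ℝ), HasDerivAt p (v t) t)
    (hv : ∀ t ≥ (0 : ℝ), HasDerivAt v (u t) t)
    -- control bounds
    (hun : ∀ t ≥ (0 : ℝ), ‖un t‖ ≤ umax)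
    (hu : ∀ t ≥ (0 : ℝ), ‖u t‖ ≤ umax)
    -- equal initial conditions
    (hp0 : p 0 = pn 0) (hv0 : v 0 = vn 0)
    -- the attack is undetectable
    (hund : Undetectable pn p uGNSS) :
    ∀ t ≥ (0 : ℝ),
      ⟪p t, p t⟫_ℝ = ⟪pn t, pn t⟫_ℝ ∧ ⟪v t, p t⟫_ℝ = ⟪vn t, pn t⟫_ℝ := by
  intro t ht
  obtain ⟨-, hrssi⟩ := hund t ht
  refine ⟨hrssi, ?_⟩
  rcases lt_or_eq_of_le ht with htpos | h0
  · have hf : HasDerivAt (fun s => ⟪p s, p s⟫_ℝ) (⟪p t, v t⟫_ℝ + ⟪v t, p t⟫_ℝ) t :=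
      (hp t ht).inner ℝ (hp t ht)
    have hg : HasDerivAt (fun s => ⟪pn s, pn s⟫_ℝ) (⟪pn t, vn t⟫_ℝ + ⟪vn t, pn t⟫_ℝ) t :=
      (hpn t ht).inner ℝ (hpn t ht)
    have heq : (fun s => ⟪p s, p s⟫_ℝ) =ᶠ[nhds t] (fun s => ⟪pn s, pn s⟫_ℝ) := by
      filter_upwards [Ioi_mem_nhds htpos] with s hs
      exact (hund s (le_of_lt hs)).2
    have huniq := (hg.congr_of_eventuallyEq heq).unique hf
    have h1 : ⟪p t, v t⟫_ℝ = ⟪v t, p t⟫_ℝ := real_inner_comm _ _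
    have h2 : ⟪pn t, vn t⟫_ℝ = ⟪vn t, pn t⟫_ℝ := real_inner_comm _ _
    linarith
  · rw [← h0, hp0, hv0]
end

section
/- The attack (u, u^GNSS) is undetectable if and only if, for all times t ≥ 0, u(t)ᵀp(t) = u_n(t)ᵀp_n(t) + ‖v_n(t)‖² − ‖v(t)‖² and u^GNSS(t) = p_n(t) − p(t). -/
open scoped InnerProductSpace

/-! The GNSS condition is a rearrangement of `p + uGNSS = pₙ`. For the RSSI condition, the
mismatch `f = ‖p‖² - ‖pₙ‖²` has `f' = 2 (⟪p, v⟫ - ⟪pₙ, vₙ⟫)` and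
`f'' = 2 (⟪u, p⟫ + ‖v‖² - ⟪uₙ, pₙ⟫ - ‖vₙ‖²)`. Equal initial conditions give `f 0 = f' 0 = 0`,
so `f` vanishes on `[0, ∞)` exactly when `f''` does. -/

open Set

section Vanishing

variable {F : Type*} [NormedAddCommGroup F] [NormedSpace ℝ F] {a : ℝ}

theorem forall_ge_eq_zero_iff_deriv_of_hasDerivAt {f f' : ℝ → F}
    (hf : ∀ t ≥ a, HasDerivAt f (f' t) t) (ha : f a = 0) :
    (∀ t ≥ a, f t = 0) ↔ ∀ t ≥ a, f' t = 0 := by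
  constructor
  · intro h t ht
    -- derivatives within `Ici a` are unique, and there `f` agrees with `0`
    have hzero : HasDerivWithinAt f 0 (Ici a) t :=
      (hasDerivWithinAt_const t (Ici a) 0).congr h (h t ht)
    exact (uniqueDiffOn_Ici a t ht).eq_deriv _ (hf t ht).hasDerivWithinAt hzero
  · intro h t ht
    have hcont : ContinuousOn f (Icc a t) := fun s hs =>
      (hf s hs.1).continuousAt.continuousWithinAt
    have hconst := constant_of_has_deriv_right_zero hcont fun s hs => by
      simpa only [h s hs.1] using (hf s hs.1).hasDerivWithinAt
    rw [hconst t (right_mem_Icc.2 ht), ha]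

theorem forall_ge_eq_zero_iff_deriv2_of_hasDerivAt {f f' f'' : ℝ → F}
    (hf : ∀ t ≥ a, HasDerivAt f (f' t) t) (hf' : ∀ t ≥ a, HasDerivAt f' (f'' t) t)
    (ha : f a = 0) (ha' : f' a = 0) :
    (∀ t ≥ a, f t = 0) ↔ ∀ t ≥ a, f'' t = 0 :=
  (forall_ge_eq_zero_iff_deriv_of_hasDerivAt hf ha).trans
    (forall_ge_eq_zero_iff_deriv_of_hasDerivAt hf' ha')

end Vanishing

theorem forall_ge_inner_self_eq_iff_of_double_integrator
    {E : Type*} [NormedAddCommGroup E] [InnerProductSpace ℝ E] {pn vn un p v u : ℝ → E}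
    (hpn : ∀ t ≥ (0 : ℝ), HasDerivAt pn (vn t) t) (hvn : ∀ t ≥ (0 : ℝ), HasDerivAt vn (un t) t)
    (hp : ∀ t ≥ (0 : ℝ), HasDerivAt p (v t) t) (hv : ∀ t ≥ (0 : ℝ), HasDerivAt v (u t) t)
    (hp0 : p 0 = pn 0) (hv0 : v 0 = vn 0) :
    (∀ t ≥ (0 : ℝ), ⟪p t, p t⟫_ℝ = ⟪pn t, pn t⟫_ℝ) ↔
      ∀ t ≥ (0 : ℝ), ⟪u t, p t⟫_ℝ = ⟪un t, pn t⟫_ℝ + ‖vn t‖ ^ 2 - ‖v t‖ ^ 2 := by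
  set f : ℝ → ℝ := fun s => ‖p s‖ ^ 2 - ‖pn s‖ ^ 2
  set f' : ℝ → ℝ := fun s => 2 * (⟪p s, v s⟫_ℝ - ⟪pn s, vn s⟫_ℝ)
  set f'' : ℝ → ℝ := fun s =>
    2 * (⟪u s, p s⟫_ℝ + ‖v s‖ ^ 2 - (⟪un s, pn s⟫_ℝ + ‖vn s‖ ^ 2))
  have hf : ∀ t ≥ (0 : ℝ), HasDerivAt f (f' t) t := fun t ht =>
    ((hp t ht).norm_sq.sub (hpn t ht).norm_sq).congr_deriv (by ring)
  have hf' : ∀ t ≥ (0 : ℝ), HasDerivAt f' (f'' t) t := fun t ht =>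
    ((((hp t ht).inner ℝ (hv t ht)).sub ((hpn t ht).inner ℝ (hvn t ht))).const_mul 2).congr_deriv
      (by simp only [f'', real_inner_comm (p t), real_inner_comm (pn t),
        real_inner_self_eq_norm_sq])
  have key := forall_ge_eq_zero_iff_deriv2_of_hasDerivAt hf hf'
    (by simp [f, hp0]) (by simp [f', hp0, hv0])
  refine (forall₂_congr fun t _ => ?_).trans (key.trans (forall₂_congr fun t _ => ?_))
  · rw [real_inner_self_eq_norm_sq, real_inner_self_eq_norm_sq, sub_eq_zero]
  · simp only [f'']
    constructor <;> intro h <;> linarith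

theorem implicit_characterization_undetectable_general
    (pn vn un p v u uGNSS : ℝ → E2)
    -- nominal double-integrator dynamics: ṗₙ = vₙ, v̇ₙ = uₙ
    (hpn : ∀ t ≥ (0 : ℝ), HasDerivAt pn (vn t) t)
    (hvn : ∀ t ≥ (0 : ℝ), HasDerivAt vn (un t) t)
    -- attacked double-integrator dynamics: ṗ = v, v̇ = u
    (hp : ∀ t ≥ (0 : ℝ), HasDerivAt p (v t) t)
    (hv : ∀ t ≥ (0 : ℝ), HasDerivAt v (u t) t)
    -- equal initial conditions
    (hp0 : p 0 = pn 0) (hv0 : v 0 = vn 0) :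
    Undetectable pn p uGNSS ↔
      ∀ t ≥ (0 : ℝ),
        ⟪u t, p t⟫_ℝ = ⟪un t, pn t⟫_ℝ + ‖vn t‖ ^ 2 - ‖v t‖ ^ 2 ∧
        uGNSS t = pn t - p t := by
  simp only [Undetectable, forall₂_and, ← eq_sub_iff_add_eq',
    forall_ge_inner_self_eq_iff_of_double_integrator hpn hvn hp hv hp0 hv0]
  exact and_comm

/-- **Theorem 1 (Implicit characterization of undetectable attacks).**
The attack `(u, uGNSS)` is undetectable if and only if, at all times `t ≥ 0`,
`uᵀp = uₙᵀpₙ + ‖vₙ‖² − ‖v‖²` and `uGNSS = pₙ − p`. -/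
theorem implicit_characterization_undetectable
    (umax : ℝ) (humax : 0 < umax)
    (pn vn un p v u uGNSS : ℝ → E2)
    -- nominal double-integrator dynamics: ṗₙ = vₙ, v̇ₙ = uₙ
    (hpn : ∀ t ≥ (0 : ℝ), HasDerivAt pn (vn t) t)
    (hvn : ∀ t ≥ (0 : ℝ), HasDerivAt vn (un t) t)
    -- attacked double-integrator dynamics: ṗ = v, v̇ = u
    (hp : ∀ t ≥ (0 : ℝ), HasDerivAt p (v t) t)
    (hv : ∀ t ≥ (0 : ℝ), HasDerivAt v (u t) t)
    -- control bounds
    (hun : ∀ t ≥ (0 : ℝ), ‖un t‖ ≤ umax)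
    (hu : ∀ t ≥ (0 : ℝ), ‖u t‖ ≤ umax)
    -- equal initial conditions
    (hp0 : p 0 = pn 0) (hv0 : v 0 = vn 0) :
    Undetectable pn p uGNSS ↔
      ∀ t ≥ (0 : ℝ),
        ⟪u t, p t⟫_ℝ = ⟪un t, pn t⟫_ℝ + ‖vn t‖ ^ 2 - ‖v t‖ ^ 2 ∧
        uGNSS t = pn t - p t :=
  implicit_characterization_undetectable_general pn vn un p v u uGNSS hpn hvn hp hv hp0 hv0
end

section
/- Assume the attacked position satisfies ‖p(t)‖ ≠ 0 for all t ≥ 0. Then the attack (u, u^GNSS) is undetectable if and only if, for all t ≥ 0, u(t) = a_r(t) p(t) + w(t) and u^GNSS(t) = p_n(t) − p(t), where w(t)ᵀp(t) = 0 and a_r(t) = (u_n(t)ᵀp_n(t) + ‖v_n(t)‖² − ‖v(t)‖²)/‖p(t)‖². -/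
open scoped InnerProductSpace

/-- A real function with vanishing derivative on `[0,∞)` is constant there. -/
lemma const_of_deriv_zero (f : ℝ → ℝ) (hf : ∀ s ≥ (0 : ℝ), HasDerivAt f 0 s) :
    ∀ t ≥ (0 : ℝ), f t = f 0 := by
  intro t ht
  have := constant_of_has_deriv_right_zero (f := f) (a := 0) (b := t)
    (fun s hs => (hf s hs.1).continuousAt.continuousWithinAt)
    (fun s hs => (hf s hs.1).hasDerivWithinAt)
  exact this t ⟨le_refl 0 |>.trans ht |>.trans (le_refl t) |>.trans_eq rfl |>.trans (le_refl t) |> fun _ => ht, le_refl t⟩ |>.symm ▸ this t ⟨ht, le_refl t⟩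

/-- Two functions equal on `[0,∞)` have equal derivatives at every `t ≥ 0`. -/
lemma deriv_eq_of_eqOn {f g : ℝ → ℝ} {f' g' : ℝ} {t : ℝ} (ht : 0 ≤ t)
    (hf : HasDerivAt f f' t) (hg : HasDerivAt g g' t)
    (hfg : ∀ s ≥ (0 : ℝ), f s = g s) : f' = g' := by
  have h1 : HasDerivWithinAt g f' (Set.Ici 0) t :=
    (hf.hasDerivWithinAt).congr (fun s hs => (hfg s hs).symm) (hfg t ht).symm
  have hu : UniqueDiffWithinAt ℝ (Set.Ici (0 : ℝ)) t := uniqueDiffOn_Ici 0 t ht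
  rw [← h1.derivWithin hu, hg.hasDerivWithinAt.derivWithin hu]

/-- **Corollary 1 (Explicit characterization of undetectable attacks).**
Assume `‖p(t)‖ ≠ 0` at all times. The attack `(u, uGNSS)` is undetectable if
and only if, at all times `t ≥ 0`, `u = a_r p + w` with `wᵀp = 0`,
`a_r = (uₙᵀpₙ + ‖vₙ‖² − ‖v‖²)/‖p‖²`, and `uGNSS = pₙ − p`. -/
theorem explicit_characterization_undetectable
    (umax : ℝ) (humax : 0 < umax)
    (pn vn un p v u uGNSS : ℝ → E2)
    -- nominal double-integrator dynamics: ṗₙ = vₙ, v̇ₙ = uₙ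
    (hpn : ∀ t ≥ (0 : ℝ), HasDerivAt pn (vn t) t)
    (hvn : ∀ t ≥ (0 : ℝ), HasDerivAt vn (un t) t)
    -- attacked double-integrator dynamics: ṗ = v, v̇ = u
    (hp : ∀ t ≥ (0 : ℝ), HasDerivAt p (v t) t)
    (hv : ∀ t ≥ (0 : ℝ), HasDerivAt v (u t) t)
    -- control bounds
    (hun : ∀ t ≥ (0 : ℝ), ‖un t‖ ≤ umax)
    (hu : ∀ t ≥ (0 : ℝ), ‖u t‖ ≤ umax)
    -- equal initial conditions
    (hp0 : p 0 = pn 0) (hv0 : v 0 = vn 0)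
    -- the attacked position never vanishes
    (hpne : ∀ t ≥ (0 : ℝ), ‖p t‖ ≠ 0) :
    Undetectable pn p uGNSS ↔
      ∀ t ≥ (0 : ℝ), ∃ w : E2,
        ⟪w, p t⟫_ℝ = 0 ∧
        u t = ((⟪un t, pn t⟫_ℝ + ‖vn t‖ ^ 2 - ‖v t‖ ^ 2) / ‖p t‖ ^ 2) • p t + w ∧
        uGNSS t = pn t - p t := by
  -- derivatives of the squared norms
  have hF : ∀ t ≥ (0 : ℝ), HasDerivAt (fun s => ⟪p s, p s⟫_ℝ)
      (⟪p t, v t⟫_ℝ + ⟪v t, p t⟫_ℝ) t := fun t ht => (hp t ht).inner ℝ (hp t ht)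
  have hG : ∀ t ≥ (0 : ℝ), HasDerivAt (fun s => ⟪pn s, pn s⟫_ℝ)
      (⟪pn t, vn t⟫_ℝ + ⟪vn t, pn t⟫_ℝ) t := fun t ht => (hpn t ht).inner ℝ (hpn t ht)
  have hA : ∀ t ≥ (0 : ℝ), HasDerivAt (fun s => ⟪p s, v s⟫_ℝ + ⟪v s, p s⟫_ℝ)
      ((⟪p t, u t⟫_ℝ + ⟪v t, v t⟫_ℝ) + (⟪v t, v t⟫_ℝ + ⟪u t, p t⟫_ℝ)) t := fun t ht =>
    ((hp t ht).inner ℝ (hv t ht)).add ((hv t ht).inner ℝ (hp t ht))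
  have hB : ∀ t ≥ (0 : ℝ), HasDerivAt (fun s => ⟪pn s, vn s⟫_ℝ + ⟪vn s, pn s⟫_ℝ)
      ((⟪pn t, un t⟫_ℝ + ⟪vn t, vn t⟫_ℝ) + (⟪vn t, vn t⟫_ℝ + ⟪un t, pn t⟫_ℝ)) t := fun t ht =>
    ((hpn t ht).inner ℝ (hvn t ht)).add ((hvn t ht).inner ℝ (hpn t ht))
  constructor
  · intro hU t ht
    -- first derivative equality
    have hRSSI : ∀ s ≥ (0 : ℝ), ⟪p s, p s⟫_ℝ = ⟪pn s, pn s⟫_ℝ := fun s hs => (hU s hs).2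
    have h1 : ∀ s ≥ (0 : ℝ), ⟪p s, v s⟫_ℝ + ⟪v s, p s⟫_ℝ
        = ⟪pn s, vn s⟫_ℝ + ⟪vn s, pn s⟫_ℝ := fun s hs =>
      deriv_eq_of_eqOn hs (hF s hs) (hG s hs) hRSSI
    have h2 : (⟪p t, u t⟫_ℝ + ⟪v t, v t⟫_ℝ) + (⟪v t, v t⟫_ℝ + ⟪u t, p t⟫_ℝ)
        = (⟪pn t, un t⟫_ℝ + ⟪vn t, vn t⟫_ℝ) + (⟪vn t, vn t⟫_ℝ + ⟪un t, pn t⟫_ℝ) :=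
      deriv_eq_of_eqOn ht (hA t ht) (hB t ht) h1
    have hup : ⟪u t, p t⟫_ℝ = ⟪un t, pn t⟫_ℝ + ‖vn t‖ ^ 2 - ‖v t‖ ^ 2 := by
      rw [real_inner_self_eq_norm_sq, real_inner_self_eq_norm_sq] at h2
      have e1 := real_inner_comm (p t) (u t)
      have e2 := real_inner_comm (pn t) (un t)
      linarith
    refine ⟨u t - ((⟪un t, pn t⟫_ℝ + ‖vn t‖ ^ 2 - ‖v t‖ ^ 2) / ‖p t‖ ^ 2) • p t, ?_, by abel, ?_⟩
    · rw [inner_sub_left, real_inner_smul_left, real_inner_self_eq_norm_sq,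
        div_mul_cancel₀ _ (pow_ne_zero 2 (hpne t ht)), hup, sub_self]
    · have := (hU t ht).1
      rw [← this]; abel
  · intro hC
    -- the key inner-product identity from the characterization
    have hup : ∀ t ≥ (0 : ℝ), ⟪u t, p t⟫_ℝ = ⟪un t, pn t⟫_ℝ + ‖vn t‖ ^ 2 - ‖v t‖ ^ 2 := by
      intro t ht
      obtain ⟨w, hw, huw, -⟩ := hC t ht
      rw [huw, inner_add_left, real_inner_smul_left, real_inner_self_eq_norm_sq, hw,
        div_mul_cancel₀ _ (pow_ne_zero 2 (hpne t ht)), add_zero]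
    -- the first-derivative difference is constant zero
    have hk : ∀ t ≥ (0 : ℝ), HasDerivAt
        (fun s => (⟪p s, v s⟫_ℝ + ⟪v s, p s⟫_ℝ) - (⟪pn s, vn s⟫_ℝ + ⟪vn s, pn s⟫_ℝ)) 0 t := by
      intro t ht
      have := (hA t ht).sub (hB t ht)
      have hz : (⟪p t, u t⟫_ℝ + ⟪v t, v t⟫_ℝ) + (⟪v t, v t⟫_ℝ + ⟪u t, p t⟫_ℝ)
          - ((⟪pn t, un t⟫_ℝ + ⟪vn t, vn t⟫_ℝ) + (⟪vn t, vn t⟫_ℝ + ⟪un t, pn t⟫_ℝ)) = 0 := by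
        have h3 := hup t ht
        have e1 := real_inner_comm (p t) (u t)
        have e2 := real_inner_comm (pn t) (un t)
        rw [real_inner_self_eq_norm_sq, real_inner_self_eq_norm_sq]
        linarith
      rwa [hz] at this
    have hk0 : ∀ t ≥ (0 : ℝ),
        (⟪p t, v t⟫_ℝ + ⟪v t, p t⟫_ℝ) - (⟪pn t, vn t⟫_ℝ + ⟪vn t, pn t⟫_ℝ) = 0 := by
      intro t ht
      rw [const_of_deriv_zero _ hk t ht, hp0, hv0, sub_self]
    have hh : ∀ t ≥ (0 : ℝ), HasDerivAt
        (fun s => ⟪p s, p s⟫_ℝ - ⟪pn s, pn s⟫_ℝ) 0 t := by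
      intro t ht
      have := (hF t ht).sub (hG t ht)
      rwa [show ⟪p t, v t⟫_ℝ + ⟪v t, p t⟫_ℝ - (⟪pn t, vn t⟫_ℝ + ⟪vn t, pn t⟫_ℝ) = 0
        from hk0 t ht] at this
    intro t ht
    obtain ⟨w, -, -, hg⟩ := hC t ht
    constructor
    · rw [hg]; abel
    · have := const_of_deriv_zero _ hh t ht
      rw [hp0] at this
      simpa [sub_eq_zero] using this
end

section
/- Let x_n = (p_n, v_n) be the trajectory generated by a secure control input, i.e., u_n(t) = κ(t) (u_max/‖p_n(t)‖) p_n(t) with κ(t) ∈ {−1,1} and p_n(t) ≠ 0 for all t, with initial condition p_n(0) = (x̄₁, 0) and v_n(0) = (x̄₃, 0), where x̄₁ > 0 and x̄₃ ∈ ℝ. Then for all t ≥ 0 the trajectory remains on the positive x-axis with velocity along the x-axis: p_n(t) = (p_n¹(t), 0) with p_n¹(t) > 0, and v_n(t) = (v_n¹(t), 0). -/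
/-!
Along the secure dynamics the off-axis coordinates `(y, w) = (pₙ¹, vₙ¹)` solve the linear system
`y' = w`, `w' = c y` with `c = κ u_max / ‖pₙ‖`. On every compact time interval `‖pₙ‖` is bounded
away from `0`, so `c` is bounded and Grönwall's inequality forces `(y, w) = 0` from zero initial data.
The trajectory therefore stays on the x-axis, where `pₙ ≠ 0` means that the first coordinate never
vanishes; being positive at time `0`, it stays positive by connectedness.
-/

open scoped InnerProductSpace

open Set

theorem HasDerivAt.piLp_apply {𝕜 ι : Type*} [NontriviallyNormedField 𝕜] [Fintype ι]
    {p : ENNReal} [Fact (1 ≤ p)] {E : ι → Type*} [∀ i, NormedAddCommGroup (E i)]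
    [∀ i, NormedSpace 𝕜 (E i)] {f : 𝕜 → PiLp p E} {f' : PiLp p E} {t : 𝕜}
    (hf : HasDerivAt f f' t) (i : ι) : HasDerivAt (fun s => f s i) (f' i) t :=
  (PiLp.hasFDerivAt_apply p (f t) i).comp_hasDerivAt t hf

theorem eq_zero_of_second_order_linear_of_abs_le {y w c : ℝ → ℝ} {a b K : ℝ}
    (hy : ∀ t ∈ Icc a b, HasDerivAt y (w t) t)
    (hw : ∀ t ∈ Icc a b, HasDerivAt w (c t * y t) t)
    (hc : ∀ t ∈ Ico a b, |c t| ≤ K) (hya : y a = 0) (hwa : w a = 0) :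
    ∀ t ∈ Icc a b, y t = 0 ∧ w t = 0 := by
  have hderiv : ∀ t ∈ Icc a b, HasDerivAt (fun s => (y s, w s)) (w t, c t * y t) t :=
    fun t ht => (hy t ht).prodMk (hw t ht)
  have hbound : ∀ t ∈ Ico a b, ‖(w t, c t * y t)‖ ≤ max 1 K * ‖(y t, w t)‖ := by
    intro t ht
    simp only [Prod.norm_def, Real.norm_eq_abs, abs_mul]
    refine max_le ?_ ?_
    · exact (le_max_right _ _).trans (le_mul_of_one_le_left (by positivity) (le_max_left _ _))
    · exact mul_le_mul ((hc t ht).trans (le_max_right _ _)) (le_max_left _ _) (abs_nonneg _)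
        (zero_le_one.trans (le_max_left _ _))
  intro t ht
  have h := eq_zero_of_abs_deriv_le_mul_abs_self_of_eq_zero_right
    (fun t ht => (hderiv t ht).continuousAt.continuousWithinAt)
    (fun t ht => (hderiv t (Ico_subset_Icc_self ht)).hasDerivWithinAt)
    (by simp [hya, hwa]) hbound t ht
  exact Prod.ext_iff.mp h

theorem secure_trajectory_stays_on_axis_general
    (umax : ℝ)
    (pn vn : ℝ → E2) (κ : ℝ → ℝ)
    -- secure control input: values in {−1, 1}, extremal radial form, pₙ ≠ 0
    (hκ : ∀ t ≥ (0 : ℝ), κ t = 1 ∨ κ t = -1)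
    (hne : ∀ t ≥ (0 : ℝ), pn t ≠ 0)
    -- nominal double-integrator dynamics: ṗₙ = vₙ, v̇ₙ = uₙ = κ(u_max/‖pₙ‖)pₙ
    (hpn : ∀ t ≥ (0 : ℝ), HasDerivAt pn (vn t) t)
    (hvn : ∀ t ≥ (0 : ℝ), HasDerivAt vn ((κ t * umax / ‖pn t‖) • pn t) t)
    -- initial conditions on the positive x-axis
    (x1bar x3bar : ℝ) (hx1 : 0 < x1bar)
    (hp0 : pn 0 0 = x1bar ∧ pn 0 1 = 0)
    (hv0 : vn 0 0 = x3bar ∧ vn 0 1 = 0) :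
    ∀ t ≥ (0 : ℝ), pn t 1 = 0 ∧ 0 < pn t 0 ∧ vn t 1 = 0 := by
  have hcont : ContinuousOn pn (Ici 0) := fun t ht => (hpn t ht).continuousAt.continuousWithinAt
  have off_axis : ∀ T ≥ (0 : ℝ), pn T 1 = 0 ∧ vn T 1 = 0 := by
    intro T hT
    obtain ⟨C, hC⟩ := isCompact_Icc.exists_bound_of_continuousOn
      ((hcont.mono Icc_subset_Ici_self).norm.inv₀ fun t ht => norm_ne_zero_iff.2 (hne t ht.1))
    have hgain : ∀ t ∈ Ico 0 T, |κ t * umax / ‖pn t‖| ≤ |umax| * C := by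
      intro t ht
      have hκ_abs : |κ t| = 1 := by rcases hκ t ht.1 with h | h <;> simp [h]
      rw [abs_div, abs_mul, hκ_abs, one_mul, abs_norm, div_eq_mul_inv]
      exact mul_le_mul_of_nonneg_left ((le_abs_self _).trans (hC t (Ico_subset_Icc_self ht)))
        (abs_nonneg _)
    exact eq_zero_of_second_order_linear_of_abs_le (fun t ht => (hpn t ht.1).piLp_apply 1)
      (fun t ht => (hvn t ht.1).piLp_apply 1) hgain hp0.2 hv0.2 T ⟨hT, le_rfl⟩
  have on_axis_ne : ∀ t ∈ Ici (0 : ℝ), pn t 0 ≠ 0 := fun t ht h0 =>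
    hne t ht (by ext i; fin_cases i; exacts [h0, (off_axis t ht).1])
  intro t ht
  refine ⟨(off_axis t ht).1, ?_, (off_axis t ht).2⟩
  exact isPreconnected_Ici.lt_of_ne ((PiLp.continuous_apply 2 _ 0).comp_continuousOn hcont)
    on_axis_ne ⟨0, self_mem_Ici, show 0 < pn 0 0 from hp0.1 ▸ hx1⟩ ht

/-- **Secure trajectories starting on the positive x-axis stay on it.** Let
`xₙ = (pₙ, vₙ)` be generated by a secure control input
`uₙ(t) = κ(t) (u_max/‖pₙ(t)‖) pₙ(t)` with `κ(t) ∈ {−1, 1}` and `pₙ(t) ≠ 0` at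
all times, with initial conditions `pₙ(0) = (x̄₁, 0)`, `vₙ(0) = (x̄₃, 0)` where
`x̄₁ > 0`. Then for all `t ≥ 0` the trajectory stays on the positive x-axis
with velocity along the x-axis: `pₙ(t) = (pₙ¹(t), 0)` with `pₙ¹(t) > 0`, and
`vₙ(t) = (vₙ¹(t), 0)`. -/
theorem secure_trajectory_stays_on_axis
    (umax : ℝ) (humax : 0 < umax)
    (pn vn : ℝ → E2) (κ : ℝ → ℝ)
    -- secure control input: values in {−1, 1}, extremal radial form, pₙ ≠ 0
    (hκ : ∀ t ≥ (0 : ℝ), κ t = 1 ∨ κ t = -1)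
    (hne : ∀ t ≥ (0 : ℝ), pn t ≠ 0)
    -- nominal double-integrator dynamics: ṗₙ = vₙ, v̇ₙ = uₙ = κ(u_max/‖pₙ‖)pₙ
    (hpn : ∀ t ≥ (0 : ℝ), HasDerivAt pn (vn t) t)
    (hvn : ∀ t ≥ (0 : ℝ), HasDerivAt vn ((κ t * umax / ‖pn t‖) • pn t) t)
    -- initial conditions on the positive x-axis
    (x1bar x3bar : ℝ) (hx1 : 0 < x1bar)
    (hp0 : pn 0 0 = x1bar ∧ pn 0 1 = 0)
    (hv0 : vn 0 0 = x3bar ∧ vn 0 1 = 0) :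
    ∀ t ≥ (0 : ℝ), pn t 1 = 0 ∧ 0 < pn t 0 ∧ vn t 1 = 0 :=
  secure_trajectory_stays_on_axis_general umax pn vn κ hκ hne hpn hvn x1bar x3bar hx1 hp0 hv0
end
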